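/- arXiv:math/0110307 — 3 statements merged into one kernel-verified Lean document; each statement's English description precedes it below -/
import Mathlib

section
/- For each integer a, the limit (as formal power series in q) of the q-trinomial coefficient ⟨L, a⟩₂ as L → ∞ equals 1/(q;q)_∞; equivalently, Σ_{k=0}^∞ q^{k(k+a)} / ((q;q)_k (q;q)_{k+a}) = 1/(q;q)_∞ as formal power series, where for a ≥ 0 the sum starts at k = 0 and terms with k + a < 0 vanish. -/
open Finset PowerSeries

noncomputable section

/-- The finite q-Pochhammer symbol `(q;q)_n = ∏_{j=1}^n (1 - q^j)` in `ℚ[[q]]`. -/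
def qp (n : ℕ) : PowerSeries ℚ :=
  ∏ j ∈ Finset.range n, (1 - (PowerSeries.X : PowerSeries ℚ) ^ (j + 1))

namespace QtriAux

local notation "XX" => (PowerSeries.X : PowerSeries ℚ)

lemma qp_zero : qp 0 = 1 := by simp [qp]

lemma qp_succ (n : ℕ) : qp (n + 1) = qp n * (1 - XX ^ (n + 1)) := by
  simp [qp, Finset.prod_range_succ]

lemma constantCoeff_qp (n : ℕ) : PowerSeries.constantCoeff (R := ℚ) (qp n) = 1 := by
  induction n with
  | zero => simp [qp_zero]
  | succ n ih => simp [qp_succ, ih]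

lemma qp_ne (n : ℕ) : PowerSeries.constantCoeff (R := ℚ) (qp n) ≠ 0 := by
  rw [constantCoeff_qp]; norm_num

lemma qp_inv_succ (n : ℕ) : (qp n)⁻¹ = (1 - XX ^ (n + 1)) * (qp (n + 1))⁻¹ := by
  have h1 : qp (n+1) * (qp (n+1))⁻¹ = 1 := PowerSeries.mul_inv_cancel _ (qp_ne _)
  calc (qp n)⁻¹ = (qp n)⁻¹ * (qp (n+1) * (qp (n+1))⁻¹) := by rw [h1, mul_one]
    _ = (qp n)⁻¹ * qp n * ((1 - XX ^ (n+1)) * (qp (n+1))⁻¹) := by rw [qp_succ]; ring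
    _ = (1 - XX ^ (n+1)) * (qp (n+1))⁻¹ := by
        rw [mul_comm ((qp n)⁻¹) (qp n), PowerSeries.mul_inv_cancel _ (qp_ne _), one_mul]

/-- The general term of the sum. -/
def T (b k : ℕ) : PowerSeries ℚ := XX ^ (k * (k + b)) * (qp k * qp (k + b))⁻¹

lemma coeff_X_pow_mul_eq_zero {N m : ℕ} (h : N < m) (f : PowerSeries ℚ) :
    PowerSeries.coeff (R := ℚ) N (XX ^ m * f) = 0 :=
  (PowerSeries.X_pow_dvd_iff.mp (dvd_mul_right _ _)) N h

lemma coeff_T_eq_zero {b k N : ℕ} (h : N < k * (k + b)) :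
    PowerSeries.coeff (R := ℚ) N (T b k) = 0 :=
  coeff_X_pow_mul_eq_zero h _

/-- The telescoping auxiliary series. -/
def V (b : ℕ) : ℕ → PowerSeries ℚ
  | 0 => 0
  | (k+1) => XX ^ ((k+1) * (k+1+b)) * ((qp k)⁻¹ * (qp (k+1+b))⁻¹)

lemma tele (b k : ℕ) : T b k - T (b+1) k = V b k - V b (k+1) := by
  cases k with
  | zero =>
      simp only [T, V, qp_zero, Nat.zero_mul, pow_zero, one_mul, Nat.zero_add, inv_one,
        PowerSeries.mul_inv_rev, zero_sub, Nat.one_mul]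
      rw [qp_inv_succ b, show 1 + b = b + 1 by omega]
      ring
  | succ k =>
      have e1 : k + 1 + b = (k + b) + 1 := by omega
      have e2 : k + 1 + (b + 1) = (k + b + 1) + 1 := by omega
      simp only [T, V, PowerSeries.mul_inv_rev, e1, e2]
      rw [qp_inv_succ (k+b+1), qp_inv_succ k, show k+1+1+b = k+b+1+1 by omega]
      ring

lemma sum_step (b M : ℕ) :
    (∑ k ∈ range M, T b k) - (∑ k ∈ range M, T (b+1) k) = - V b M := by
  rw [← Finset.sum_sub_distrib]
  have h := Finset.sum_range_sub' (V b) M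
  calc (∑ k ∈ range M, (T b k - T (b+1) k)) = ∑ k ∈ range M, (V b k - V b (k+1)) := by
        exact Finset.sum_congr rfl fun k _ => tele b k
    _ = V b 0 - V b M := h
    _ = - V b M := by simp [V]

lemma coeff_step (b N : ℕ) :
    PowerSeries.coeff (R := ℚ) N (∑ k ∈ range (N+1), T b k) =
    PowerSeries.coeff (R := ℚ) N (∑ k ∈ range (N+1), T (b+1) k) := by
  have h := congrArg (PowerSeries.coeff (R := ℚ) N) (sum_step b (N+1))
  have hV : PowerSeries.coeff (R := ℚ) N (V b (N+1)) = 0 := by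
    simp only [V]
    apply coeff_X_pow_mul_eq_zero
    calc N < N + 1 := Nat.lt_succ_self N
      _ ≤ (N+1) * (N+1+b) := Nat.le_mul_of_pos_right _ (by omega)
  rw [map_sub, map_neg, hV, neg_zero, sub_eq_zero] at h
  exact h

lemma coeff_shift (b m N : ℕ) :
    PowerSeries.coeff (R := ℚ) N (∑ k ∈ range (N+1), T b k) =
    PowerSeries.coeff (R := ℚ) N (∑ k ∈ range (N+1), T (b+m) k) := by
  induction m with
  | zero => rfl
  | succ m ih => exact ih.trans (coeff_step (b+m) N)

lemma coeff_qp_inv_stable {N n : ℕ} (h : N ≤ n) :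
    PowerSeries.coeff (R := ℚ) N (qp n)⁻¹ = PowerSeries.coeff (R := ℚ) N (qp N)⁻¹ := by
  induction n, h using Nat.le_induction with
  | base => rfl
  | succ n hn ih =>
      rw [← ih, qp_inv_succ n, sub_mul, one_mul, map_sub,
        coeff_X_pow_mul_eq_zero (by omega), sub_zero]

lemma coeff_base {b N : ℕ} (h : N ≤ b) :
    PowerSeries.coeff (R := ℚ) N (∑ k ∈ range (N+1), T b k) =
    PowerSeries.coeff (R := ℚ) N (qp N)⁻¹ := by
  rw [map_sum]
  rw [Finset.sum_eq_single 0]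
  · simp only [T, Nat.zero_mul, pow_zero, one_mul, Nat.zero_add, qp_zero]
    exact coeff_qp_inv_stable h
  · intro k _ hk
    apply coeff_T_eq_zero
    have hk1 : 1 ≤ k := Nat.one_le_iff_ne_zero.mpr hk
    calc N < 1 + b := by omega
      _ ≤ k * (k + b) := by nlinarith
  · intro h0; exact absurd (Finset.mem_range.mpr (by omega)) h0

lemma main_nat (b N : ℕ) :
    PowerSeries.coeff (R := ℚ) N (∑ k ∈ range (N+1), T b k) =
    PowerSeries.coeff (R := ℚ) N (qp N)⁻¹ := by
  rw [coeff_shift b N N, coeff_base (Nat.le_add_left N b)]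

lemma main_nat' (b N M : ℕ) (h : N + 1 ≤ M) :
    PowerSeries.coeff (R := ℚ) N (∑ k ∈ range M, T b k) =
    PowerSeries.coeff (R := ℚ) N (qp N)⁻¹ := by
  rw [map_sum, ← Finset.sum_subset (Finset.range_subset_range.mpr h)]
  · rw [← map_sum, main_nat]
  · intro x hx hx'
    apply coeff_T_eq_zero
    have : N + 1 ≤ x := by
      simp only [Finset.mem_range, not_lt] at hx'
      omega
    calc N < N + 1 := Nat.lt_succ_self N
      _ ≤ x := this
      _ ≤ x * (x + b) := Nat.le_mul_of_pos_right _ (by omega)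

end QtriAux

open QtriAux

/-- `Σ_{k=0}^∞ q^{k(k+a)}/((q;q)_k (q;q)_{k+a}) = 1/(q;q)_∞` as formal power series:
for every `N`, the coefficient of `q^N` of the (truncated, but complete up to order `N`)
sum equals the coefficient of `q^N` of `1/(q;q)_N` (which agrees with `1/(q;q)_∞` up to
order `N`).  Terms with `k + a < 0` vanish. -/
theorem qtri_limit (a : ℤ) (N : ℕ) :
    PowerSeries.coeff (R := ℚ) N
      (∑ k ∈ Finset.range (N + a.natAbs + 1),
        if (k : ℤ) + a < 0 then 0
        else (PowerSeries.X : PowerSeries ℚ) ^ (((k : ℤ) * ((k : ℤ) + a)).toNat) *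
          (qp k * qp ((k : ℤ) + a).toNat)⁻¹) =
    PowerSeries.coeff (R := ℚ) N (qp N)⁻¹ := by
  obtain ⟨b, rfl | rfl⟩ := Int.eq_nat_or_neg a
  · -- a = b ≥ 0
    have hsum : (∑ k ∈ Finset.range (N + (b:ℤ).natAbs + 1),
        if (k : ℤ) + (b:ℤ) < 0 then 0
        else (PowerSeries.X : PowerSeries ℚ) ^ (((k : ℤ) * ((k : ℤ) + (b:ℤ))).toNat) *
          (qp k * qp ((k : ℤ) + (b:ℤ)).toNat)⁻¹) =
        ∑ k ∈ Finset.range (N + b + 1), T b k := by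
      rw [Int.natAbs_natCast]
      refine Finset.sum_congr rfl fun k _ => ?_
      rw [if_neg (by omega)]
      have h1 : ((k : ℤ) * ((k : ℤ) + (b:ℤ))).toNat = k * (k + b) := by
        rw [show (k : ℤ) * ((k : ℤ) + (b:ℤ)) = ((k * (k+b) : ℕ) : ℤ) by push_cast; ring,
          Int.toNat_natCast]
      have h2 : ((k : ℤ) + (b:ℤ)).toNat = k + b := by
        rw [show (k : ℤ) + (b:ℤ) = ((k + b : ℕ) : ℤ) by push_cast; ring, Int.toNat_natCast]
      rw [h1, h2]; rfl
    rw [hsum, main_nat' b N (N + b + 1) (by omega)]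
  · -- a = -b ≤ 0
    have hab : (-(b:ℤ)).natAbs = b := by simp
    rw [hab]
    have hr : N + b + 1 = b + (N + 1) := by omega
    rw [hr, Finset.sum_range_add]
    have hz : (∑ k ∈ Finset.range b,
        if (k : ℤ) + (-(b:ℤ)) < 0 then (0 : PowerSeries ℚ)
        else (PowerSeries.X : PowerSeries ℚ) ^ (((k : ℤ) * ((k : ℤ) + (-(b:ℤ)))).toNat) *
          (qp k * qp ((k : ℤ) + (-(b:ℤ))).toNat)⁻¹) = 0 := by
      refine Finset.sum_eq_zero fun k hk => ?_
      have hkb : (k : ℤ) + (-(b:ℤ)) < 0 := by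
        have := Finset.mem_range.mp hk
        omega
      rw [if_pos hkb]
    have hsum : (∑ k ∈ Finset.range (N+1),
        if ((b + k : ℕ) : ℤ) + (-(b:ℤ)) < 0 then (0 : PowerSeries ℚ)
        else (PowerSeries.X : PowerSeries ℚ) ^ ((((b + k : ℕ) : ℤ) * (((b + k : ℕ) : ℤ) + (-(b:ℤ)))).toNat) *
          (qp (b + k) * qp (((b + k : ℕ) : ℤ) + (-(b:ℤ))).toNat)⁻¹) =
        ∑ k ∈ Finset.range (N + 1), T b k := by
      refine Finset.sum_congr rfl fun k _ => ?_
      rw [if_neg (by push_cast; omega)]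
      have h1 : (((b + k : ℕ) : ℤ) * (((b + k : ℕ) : ℤ) + (-(b:ℤ)))).toNat = k * (k + b) := by
        rw [show ((b + k : ℕ) : ℤ) * (((b + k : ℕ) : ℤ) + (-(b:ℤ))) = ((k * (k+b) : ℕ) : ℤ) by
          push_cast; ring, Int.toNat_natCast]
      have h2 : (((b + k : ℕ) : ℤ) + (-(b:ℤ))).toNat = k := by
        rw [show ((b + k : ℕ) : ℤ) + (-(b:ℤ)) = ((k : ℕ) : ℤ) by push_cast; ring,
          Int.toNat_natCast]
      rw [h1, h2, T, mul_comm (qp k) (qp (k + b)), show k + b = b + k by omega]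
    rw [hz, hsum, zero_add, main_nat b N]
end
end

section
/- The polynomial T(L,a;q) := q^{(L²-a²)/2} ⟨L,a⟩₂ evaluated at q⁻¹, where ⟨L,a⟩₂ is the q-trinomial coefficient, equals Σ_{n=0, n+a+L even}^{L} q^{n²/2} [L-n choose (L-a-n)/2] [L choose n], for all integers L ≥ 0 and a with |a| ≤ L. -/
open Finset

noncomputable section

/-- The field of rational functions over ℚ in which the identities are stated. -/
abbrev K : Type := RatFunc ℚ

/-- The variable. -/
def tq : K := RatFunc.X

/-- Gaussian binomial coefficient `[n choose k]` in the variable `p`: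
`∏_{j=1}^{k} (1 - p^(n-k+j))/(1 - p^j)` when `0 ≤ k ≤ n`, and `0` otherwise. -/
def gb (p : K) (n k : ℤ) : K :=
  if 0 ≤ k ∧ k ≤ n then
    ∏ j ∈ Finset.range k.toNat, (1 - p ^ (n - k + 1 + (j : ℤ))) / (1 - p ^ (1 + (j : ℤ)))
  else 0

/-- The q-trinomial coefficient `⟨L, a⟩₂ = Σ_{k=0}^L p^{k(k+a)} [L choose k][L-k choose k+a]`. -/
def qtri (p : K) (L : ℕ) (a : ℤ) : K :=
  ∑ k ∈ Finset.range (L + 1),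
    p ^ ((k : ℤ) * ((k : ℤ) + a)) * gb p L k * gb p ((L : ℤ) - k) ((k : ℤ) + a)

lemma tq_ne_zero : (tq : K) ≠ 0 := RatFunc.X_ne_zero

lemma tq_pow_ne_one (i : ℕ) (hi : 0 < i) : (tq : K) ^ i ≠ 1 := by
  intro hcon
  have h1 : (algebraMap (Polynomial ℚ) (RatFunc ℚ)) (Polynomial.X ^ i) = algebraMap (Polynomial ℚ) (RatFunc ℚ) 1 := by
    rw [map_pow, map_one, RatFunc.algebraMap_X]
    exact hcon
  have h2 : (Polynomial.X : Polynomial ℚ) ^ i = 1 := RatFunc.algebraMap_injective ℚ h1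
  have h3 := congrArg Polynomial.natDegree h2
  simp [Polynomial.natDegree_X_pow] at h3
  omega

lemma S_zpow_ne_one : ∀ m : ℤ, 0 < m → ((tq : K) ^ 2) ^ m ≠ 1 := by
  intro m hm hcon
  lift m to ℕ using le_of_lt hm
  rw [zpow_natCast, ← pow_mul] at hcon
  exact tq_pow_ne_one (2 * m) (by omega) hcon

lemma S_ne_zero : ((tq : K) ^ 2) ≠ 0 := pow_ne_zero _ tq_ne_zero

section generic
variable (p : K) (hp1 : ∀ m : ℤ, 0 < m → p ^ m ≠ 1)

def qfac (p : K) (n : ℕ) : K := ∏ j ∈ Finset.range n, (1 - p ^ (1 + (j : ℤ)))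

include hp1 in
lemma one_sub_ne (m : ℤ) (hm : 0 < m) : 1 - p ^ m ≠ 0 :=
  sub_ne_zero_of_ne fun hh => hp1 m hm hh.symm

include hp1 in
lemma qfac_ne_zero (n : ℕ) : qfac p n ≠ 0 := by
  rw [qfac]
  exact Finset.prod_ne_zero_iff.mpr fun j _ => one_sub_ne p hp1 _ (by omega)

lemma gb_zero {p : K} {n k : ℤ} (h : ¬(0 ≤ k ∧ k ≤ n)) : gb p n k = 0 := if_neg h

include hp1 in
lemma gb_eq_qfac (n k : ℤ) (h0 : 0 ≤ k) (h1 : k ≤ n) :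
    gb p n k = qfac p n.toNat / (qfac p k.toNat * qfac p (n - k).toNat) := by
  rw [gb, if_pos ⟨h0, h1⟩]
  have hn : n.toNat = (n - k).toNat + k.toNat := by omega
  have key : qfac p n.toNat
      = qfac p (n - k).toNat * ∏ j ∈ Finset.range k.toNat, (1 - p ^ (n - k + 1 + (j : ℤ))) := by
    rw [hn, qfac, Finset.prod_range_add]
    congr 1
    apply Finset.prod_congr rfl
    intro j _
    congr 2
    push_cast
    omega
  rw [Finset.prod_div_distrib, key]
  have hden : (∏ j ∈ Finset.range k.toNat, (1 - p ^ (1 + (j : ℤ)))) = qfac p k.toNat := rfl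
  rw [hden]
  have hk := qfac_ne_zero p hp1 k.toNat
  have hnk := qfac_ne_zero p hp1 (n - k).toNat
  field_simp

include hp1 in
lemma gb_symm (n k : ℤ) (h0 : 0 ≤ k) (h1 : k ≤ n) : gb p n k = gb p n (n - k) := by
  rw [gb_eq_qfac p hp1 n k h0 h1, gb_eq_qfac p hp1 n (n - k) (by omega) (by omega)]
  rw [show n - (n - k) = k by ring, mul_comm]

end generic

section generic2
variable (p : K) (hp1 : ∀ m : ℤ, 0 < m → p ^ m ≠ 1)

include hp1 in
lemma gb_mul (n k a : ℤ) :
    gb p n k * gb p (n - k) (k + a) = gb p n (2 * k + a) * gb p (2 * k + a) k := by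
  by_cases h1 : 0 ≤ k
  · by_cases h2 : 0 ≤ k + a
    · by_cases h3 : 2 * k + a ≤ n
      · -- main case
        rw [gb_eq_qfac p hp1 n k h1 (by omega),
            gb_eq_qfac p hp1 (n - k) (k + a) h2 (by omega),
            gb_eq_qfac p hp1 n (2 * k + a) (by omega) h3,
            gb_eq_qfac p hp1 (2 * k + a) k h1 (by omega)]
        rw [show n - k - (k + a) = n - (2 * k + a) by ring,
            show 2 * k + a - k = k + a by ring]
        have q1 := qfac_ne_zero p hp1 n.toNat
        have q2 := qfac_ne_zero p hp1 k.toNat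
        have q3 := qfac_ne_zero p hp1 (n - k).toNat
        have q4 := qfac_ne_zero p hp1 (k + a).toNat
        have q5 := qfac_ne_zero p hp1 (n - (2 * k + a)).toNat
        have q6 := qfac_ne_zero p hp1 (2 * k + a).toNat
        field_simp
      · rw [gb_zero (p := p) (n := n - k) (k := k + a) (by omega),
            gb_zero (p := p) (n := n) (k := 2 * k + a) (by omega)]
        ring
    · rw [gb_zero (p := p) (n := n - k) (k := k + a) (by omega),
          gb_zero (p := p) (n := 2 * k + a) (k := k) (by omega)]
      ring
  · rw [gb_zero (p := p) (n := n) (k := k) (by omega),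
        gb_zero (p := p) (n := 2 * k + a) (k := k) (by omega)]
    ring

lemma frac_helper (u v : K) (hu : u ≠ 0) (hv : v ≠ 0) (hu1 : 1 - u ≠ 0) (hv1 : 1 - v ≠ 0) :
    (1 - u⁻¹) / (1 - v⁻¹) = v / u * ((1 - u) / (1 - v)) := by
  have hv2 : v - 1 ≠ 0 := sub_ne_zero.mpr (sub_ne_zero.mp hv1).symm
  have e1 : 1 - u⁻¹ = (u - 1) / u := by field_simp
  have e2 : 1 - v⁻¹ = (v - 1) / v := by field_simp
  rw [e1, e2, div_div_div_comm]
  rw [div_div_eq_mul_div, div_mul_eq_mul_div, div_div]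
  field_simp
  ring

include hp1 in
lemma gb_inv (hp0 : p ≠ 0) (n k : ℤ) :
    gb p⁻¹ n k = p ^ ((k - n) * k) * gb p n k := by
  by_cases h : 0 ≤ k ∧ k ≤ n
  · rw [gb, if_pos h, gb, if_pos h]
    have step : ∀ j ∈ Finset.range k.toNat,
        (1 - p⁻¹ ^ (n - k + 1 + (j : ℤ))) / (1 - p⁻¹ ^ (1 + (j : ℤ)))
          = p ^ (k - n) * ((1 - p ^ (n - k + 1 + (j : ℤ))) / (1 - p ^ (1 + (j : ℤ)))) := by
      intro j _
      have hA : 0 < n - k + 1 + (j : ℤ) := by omega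
      have hB : 0 < 1 + (j : ℤ) := by omega
      have hu : p ^ (n - k + 1 + (j : ℤ)) ≠ 0 := zpow_ne_zero _ hp0
      have hv : p ^ (1 + (j : ℤ)) ≠ 0 := zpow_ne_zero _ hp0
      have hu1 : (1 : K) - p ^ (n - k + 1 + (j : ℤ)) ≠ 0 := one_sub_ne p hp1 _ hA
      have hv1 : (1 : K) - p ^ (1 + (j : ℤ)) ≠ 0 := one_sub_ne p hp1 _ hB
      have hv1' : (1 : K) - (p ^ (1 + (j : ℤ)))⁻¹ ≠ 0 := by
        rw [sub_ne_zero]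
        intro hh
        exact hp1 _ hB (by rw [← inv_eq_one, ← hh])
      rw [inv_zpow, inv_zpow, show k - n = 1 + (j : ℤ) - (n - k + 1 + (j : ℤ)) by ring,
          zpow_sub₀ hp0]
      exact frac_helper _ _ hu hv hu1 hv1
    rw [Finset.prod_congr rfl step, Finset.prod_mul_distrib, Finset.prod_const, Finset.card_range]
    congr 1
    rw [← zpow_natCast (p ^ (k - n)), ← zpow_mul]
    congr 1
    rw [Int.toNat_of_nonneg h.1]
  · rw [gb_zero h, gb_zero h, mul_zero]

end generic2

lemma zconv : ∀ e : ℤ, ((tq : K) ^ 2) ^ e = tq ^ (2 * e) := by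
  intro e
  rw [← zpow_natCast tq 2, ← zpow_mul]
  norm_num

lemma key_collect (P A B C N : ℤ) (g1 g2 G1 G2 : K) (hN : P + A + B + C = N)
    (hg : g1 * g2 = G1 * G2) :
    tq ^ P * (tq ^ A * (tq ^ B * g1) * (tq ^ C * g2)) = tq ^ N * (G1 * G2) := by
  rw [← hg, ← hN, zpow_add₀ tq_ne_zero, zpow_add₀ tq_ne_zero, zpow_add₀ tq_ne_zero]
  ring


/-- `T(L,a;q) := q^{(L²-a²)/2} ⟨L,a⟩₂(q⁻¹)` equals
`Σ_{n=0, n+a+L even}^{L} q^{n²/2} [L-n choose (L-a-n)/2][L choose n]`,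
stated in the variable `t = q^{1/2}` (so `q = t^2`). -/
theorem T_explicit (L : ℕ) (a : ℤ) (h : |a| ≤ (L : ℤ)) :
    tq ^ ((L : ℤ) ^ 2 - a ^ 2) * qtri ((tq ^ 2)⁻¹) L a =
      ∑ n ∈ Finset.range (L + 1),
        if Even ((n : ℤ) + a + L) then
          tq ^ ((n : ℤ) ^ 2) * gb (tq ^ 2) ((L : ℤ) - n) (((L : ℤ) - a - n) / 2) *
            gb (tq ^ 2) L n
        else 0 := by
  have haL : -(L : ℤ) ≤ a ∧ a ≤ (L : ℤ) := abs_le.mp h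
  have stepA : tq ^ ((L : ℤ) ^ 2 - a ^ 2) * qtri ((tq ^ 2)⁻¹) L a
      = ∑ k ∈ Finset.range (L + 1),
          tq ^ (((L : ℤ) - a - 2 * k) ^ 2) *
            (gb (tq ^ 2) L (2 * (k : ℤ) + a) * gb (tq ^ 2) (2 * (k : ℤ) + a) k) := by
    rw [qtri, Finset.mul_sum]
    refine Finset.sum_congr rfl fun k _ => ?_
    rw [gb_inv (tq ^ 2) S_zpow_ne_one S_ne_zero,
        gb_inv (tq ^ 2) S_zpow_ne_one S_ne_zero, inv_zpow, ← zpow_neg]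
    simp only [zconv]
    exact key_collect _ _ _ _ _ _ _ _ _ (by ring)
      (gb_mul (tq ^ 2) S_zpow_ne_one (L : ℤ) (k : ℤ) a)
  rw [stepA]
  have hFzero : ∀ x ∈ Finset.range (L + 1),
      tq ^ (((L : ℤ) - a - 2 * x) ^ 2) *
          (gb (tq ^ 2) L (2 * (x : ℤ) + a) * gb (tq ^ 2) (2 * (x : ℤ) + a) x) ≠ 0 →
        (0 ≤ a + (x : ℤ) ∧ 2 * (x : ℤ) + a ≤ (L : ℤ)) := by
    intro x _ hne
    by_contra hcon
    apply hne
    rcases not_and_or.mp hcon with h' | h'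
    · rw [gb_zero (p := tq ^ 2) (n := 2 * (x : ℤ) + a) (k := (x : ℤ)) (by omega)]
      ring
    · rw [gb_zero (p := tq ^ 2) (n := (L : ℤ)) (k := 2 * (x : ℤ) + a) (by omega)]
      ring
  have hGzero : ∀ n ∈ Finset.range (L + 1),
      (if Even ((n : ℤ) + a + L) then
          tq ^ ((n : ℤ) ^ 2) * gb (tq ^ 2) ((L : ℤ) - n) (((L : ℤ) - a - n) / 2) *
            gb (tq ^ 2) L n
        else 0) ≠ 0 →
        (Even ((n : ℤ) + a + (L : ℤ)) ∧ 0 ≤ (L : ℤ) - a - n ∧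
          (L : ℤ) - a - n ≤ 2 * ((L : ℤ) - n)) := by
    intro n _ hne
    by_cases he : Even ((n : ℤ) + a + (L : ℤ))
    · refine ⟨he, ?_⟩
      rw [Int.even_iff] at he
      by_contra hcon
      apply hne
      rw [if_pos (Int.even_iff.mpr he),
        gb_zero (p := tq ^ 2) (n := (L : ℤ) - n) (k := ((L : ℤ) - a - n) / 2) (by omega)]
      ring
    · exact absurd (if_neg he) hne
  rw [← Finset.sum_filter_of_ne hFzero, ← Finset.sum_filter_of_ne hGzero]
  refine Finset.sum_nbij' (fun k => ((L : ℤ) - a - 2 * k).toNat)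
    (fun n => ((((L : ℤ) - a - n)) / 2).toNat) ?_ ?_ ?_ ?_ ?_
  · intro k hk
    simp only [Finset.mem_filter, Finset.mem_range, Int.even_iff] at hk ⊢
    omega
  · intro n hn
    simp only [Finset.mem_filter, Finset.mem_range, Int.even_iff] at hn ⊢
    omega
  · intro k hk
    simp only [Finset.mem_filter, Finset.mem_range, Int.even_iff] at hk
    omega
  · intro n hn
    simp only [Finset.mem_filter, Finset.mem_range, Int.even_iff] at hn
    omega
  · intro k hk
    simp only [Finset.mem_filter, Finset.mem_range] at hk
    obtain ⟨hk1, hk2, hk3⟩ := hk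
    have hik : ((((L : ℤ) - a - 2 * k).toNat : ℤ)) = (L : ℤ) - a - 2 * k := by omega
    rw [if_pos (by rw [hik]; exact ⟨(L : ℤ) - k, by ring⟩), hik]
    rw [show (L : ℤ) - ((L : ℤ) - a - 2 * k) = 2 * (k : ℤ) + a by ring,
        show ((L : ℤ) - a - ((L : ℤ) - a - 2 * k)) / 2 = (k : ℤ) by omega]
    rw [gb_symm (tq ^ 2) S_zpow_ne_one (L : ℤ) (2 * (k : ℤ) + a) (by omega) (by omega)]
    rw [show (L : ℤ) - (2 * (k : ℤ) + a) = (L : ℤ) - a - 2 * k by ring]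
    ring
end
end

section
/- (Alternating q-binomial reduction) For all integers L, M ≥ 0: Σ_{i=0}^M (-1)^i q^{i²} [L+M-i choose L]_q [⌊(L+1)/2⌋ choose i]_{q²} = [⌊L/2⌋+M choose M]_{q²}. -/
open Finset

noncomputable section

namespace AltRed

/-- denominator product -/
def DD (p : K) (k : ℕ) : K := ∏ j ∈ Finset.range k, (1 - p ^ (1 + j))

/-- numerator product -/
def NN (p : K) (n k : ℕ) : K := ∏ j ∈ Finset.range k, (1 - p ^ (n - k + 1 + j))

/-- Gaussian binomial with natural arguments. -/
def g (p : K) (n k : ℕ) : K := if k ≤ n then NN p n k / DD p k else 0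

lemma tq_pow_ne_one : ∀ m : ℕ, 0 < m → tq ^ m ≠ 1 := by
  intro m hm h
  have : (Polynomial.X : Polynomial ℚ) ^ m = 1 := by
    apply RatFunc.algebraMap_injective ℚ
    simpa [map_pow, RatFunc.algebraMap_X, tq] using h
  have := congrArg Polynomial.natDegree this
  simp [Polynomial.natDegree_X_pow] at this
  omega

lemma tq2_pow_ne_one : ∀ m : ℕ, 0 < m → (tq ^ 2) ^ m ≠ 1 := by
  intro m hm
  rw [← pow_mul]
  exact tq_pow_ne_one (2 * m) (by omega)

variable {p : K} (hp : ∀ m : ℕ, 0 < m → p ^ m ≠ 1)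

include hp in
lemma sub_ne (m : ℕ) (hm : 0 < m) : (1 : K) - p ^ m ≠ 0 :=
  sub_ne_zero.mpr (Ne.symm (hp m hm))

include hp in
lemma DD_ne (k : ℕ) : DD p k ≠ 0 :=
  Finset.prod_ne_zero_iff.mpr fun j _ => sub_ne hp (1 + j) (by omega)

lemma DD_succ (k : ℕ) : DD p (k + 1) = DD p k * (1 - p ^ (k + 1)) := by
  rw [DD, prod_range_succ, add_comm 1 k]; rfl

lemma NN_succ {n k : ℕ} (h : k ≤ n) : NN p (n + 1) (k + 1) = NN p n k * (1 - p ^ (n + 1)) := by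
  unfold NN
  rw [prod_range_succ, Nat.succ_sub_succ]
  rw [show n - k + 1 + k = n + 1 by omega]

lemma NN_shift {n k : ℕ} (h : k + 1 ≤ n) : NN p n (k + 1) = NN p n k * (1 - p ^ (n - k)) := by
  unfold NN
  rw [prod_range_succ']
  congr 1
  · apply Finset.prod_congr rfl
    intro j _
    rw [show n - (k + 1) + 1 + (j + 1) = n - k + 1 + j by omega]
  · rw [show n - (k + 1) + 1 + 0 = n - k by omega]

lemma g_zero (n : ℕ) : g p n 0 = 1 := by simp [g, NN, DD]

lemma g_of_lt {n k : ℕ} (h : n < k) : g p n k = 0 := by simp [g, Nat.not_le.mpr h]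

include hp in
lemma g_self (n : ℕ) : g p n n = 1 := by
  have : NN p n n = DD p n := by
    unfold NN DD
    apply Finset.prod_congr rfl
    intro j _
    rw [show n - n + 1 + j = 1 + j by omega]
  rw [g, if_pos le_rfl, this, div_self (DD_ne hp n)]

include hp in
lemma pascal₁ (n k : ℕ) :
    g p (n + 1) (k + 1) = g p n k + p ^ (k + 1) * g p n (k + 1) := by
  rcases lt_trichotomy k n with h | h | h
  · obtain ⟨d, hd, hd1⟩ : ∃ d, n = k + d ∧ 1 ≤ d := ⟨n - k, by omega, by omega⟩
    subst hd
    have hk1 : k + 1 ≤ k + d := by omega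
    simp only [g, if_pos (by omega : k + 1 ≤ k + d + 1), if_pos (by omega : k ≤ k + d),
      if_pos hk1]
    rw [NN_succ (by omega : k ≤ k + d), NN_shift hk1, DD_succ,
      show k + d - k = d by omega]
    have hne1 : DD p k ≠ 0 := DD_ne hp k
    have hne2 : (1 : K) - p ^ (k + 1) ≠ 0 := sub_ne hp (k + 1) (by omega)
    field_simp
    ring
  · subst h
    rw [g_self hp, g_self hp, g_of_lt (by omega : k < k + 1)]
    ring
  · rw [g_of_lt (by omega : n + 1 < k + 1), g_of_lt h, g_of_lt (by omega : n < k + 1)]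
    ring

include hp in
lemma pascal₂ (n k : ℕ) :
    g p (n + 1) (k + 1) = g p n (k + 1) + p ^ (n - k) * g p n k := by
  rcases lt_trichotomy k n with h | h | h
  · obtain ⟨d, hd, hd1⟩ : ∃ d, n = k + d ∧ 1 ≤ d := ⟨n - k, by omega, by omega⟩
    subst hd
    have hk1 : k + 1 ≤ k + d := by omega
    simp only [g, if_pos (by omega : k + 1 ≤ k + d + 1), if_pos (by omega : k ≤ k + d),
      if_pos hk1]
    rw [NN_succ (by omega : k ≤ k + d), NN_shift hk1, DD_succ,
      show k + d - k = d by omega]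
    have hne1 : DD p k ≠ 0 := DD_ne hp k
    have hne2 : (1 : K) - p ^ (k + 1) ≠ 0 := sub_ne hp (k + 1) (by omega)
    field_simp
    ring
  · subst h
    rw [g_self hp, g_self hp, g_of_lt (by omega : k < k + 1), Nat.sub_self]
    ring
  · rw [g_of_lt (by omega : n + 1 < k + 1), g_of_lt h, g_of_lt (by omega : n < k + 1)]
    ring

lemma DD_add (m k : ℕ) : DD p (m + k) = DD p m * NN p (m + k) k := by
  unfold DD NN
  rw [Finset.prod_range_add]
  congr 1
  apply Finset.prod_congr rfl
  intro j _
  rw [show m + k - k + 1 + j = 1 + (m + j) by omega]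

include hp in
lemma g_add_div (m k : ℕ) : g p (m + k) k = DD p (m + k) / (DD p m * DD p k) := by
  rw [g, if_pos (by omega : k ≤ m + k), DD_add m k]
  have h1 : DD p m ≠ 0 := DD_ne hp m
  have h2 : DD p k ≠ 0 := DD_ne hp k
  field_simp

include hp in
lemma g_symm (m k : ℕ) : g p (m + k) k = g p (m + k) m := by
  rw [g_add_div hp, show m + k = k + m by omega, g_add_div hp, mul_comm]

/-- the generating series of `m ↦ [L+m choose L]` -/
def Fser (p : K) (L : ℕ) : PowerSeries K := PowerSeries.mk fun m => g p (L + m) L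

open PowerSeries

lemma coeff_zero_mul_one_sub (φ : PowerSeries K) (c : K) :
    (coeff 0) (φ * (1 - C c * X)) = coeff 0 φ := by
  rw [mul_sub, mul_one, map_sub, ← mul_assoc, coeff_zero_mul_X, sub_zero]

lemma coeff_succ_mul_one_sub (φ : PowerSeries K) (c : K) (n : ℕ) :
    (coeff (n + 1)) (φ * (1 - C c * X)) = coeff (n + 1) φ - c * coeff n φ := by
  rw [mul_sub, mul_one, map_sub, ← mul_assoc, coeff_succ_mul_X, coeff_mul_C]
  ring

include hp in
lemma Fser_step (L : ℕ) :
    Fser p (L + 1) * (1 - C (p ^ (L + 1)) * X) = Fser p L := by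
  ext n
  cases n with
  | zero =>
    rw [coeff_zero_mul_one_sub]
    simp only [Fser, coeff_mk, Nat.add_zero]
    rw [g_self hp, g_self hp]
  | succ n =>
    rw [coeff_succ_mul_one_sub]
    simp only [Fser, coeff_mk]
    have h := pascal₁ hp (L + n + 1) L
    rw [show L + 1 + (n + 1) = L + n + 1 + 1 by omega,
      show L + 1 + n = L + n + 1 by omega, show L + (n + 1) = L + n + 1 by omega]
    linear_combination h

include hp in
lemma Fser_unit : ∀ L : ℕ,
    Fser p L * ∏ j ∈ Finset.range (L + 1), (1 - C (p ^ j) * X) = 1 := by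
  intro L
  induction L with
  | zero =>
    rw [Finset.prod_range_one]
    ext n
    cases n with
    | zero =>
      rw [coeff_zero_mul_one_sub]
      simp [Fser, coeff_mk, g_zero]
    | succ n =>
      rw [coeff_succ_mul_one_sub]
      simp only [Fser, coeff_mk, pow_zero, one_mul, coeff_one, Nat.succ_ne_zero, if_false]
      rw [g_zero, g_zero]
      ring
  | succ L ih =>
    rw [Finset.prod_range_succ]
    calc Fser p (L+1) * ((∏ j ∈ Finset.range (L+1), (1 - C (p^j) * X)) * (1 - C (p^(L+1)) * X))
        = (Fser p (L+1) * (1 - C (p^(L+1)) * X)) * ∏ j ∈ Finset.range (L+1), (1 - C (p^j) * X) := by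
          ring
      _ = Fser p L * ∏ j ∈ Finset.range (L+1), (1 - C (p^j) * X) := by rw [Fser_step hp]
      _ = 1 := ih

/-- q-binomial theorem series -/
def Aser (q : K) (a : ℕ) : PowerSeries K :=
  PowerSeries.mk fun i => (-1 : K) ^ i * q ^ (i ^ 2) * g (q ^ 2) a i

lemma Aser_eq (q : K) (hq2 : ∀ m : ℕ, 0 < m → (q ^ 2) ^ m ≠ 1) : ∀ a : ℕ,
    Aser q a = ∏ j ∈ Finset.range a, (1 - C (q ^ (2 * j + 1)) * X) := by
  intro a
  induction a with
  | zero =>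
    ext i
    cases i with
    | zero => simp [Aser, coeff_mk, g_zero]
    | succ i =>
      simp only [Aser, coeff_mk, Finset.range_zero, Finset.prod_empty, coeff_one,
        Nat.succ_ne_zero, if_false]
      rw [g_of_lt (by omega : 0 < i + 1)]
      ring
  | succ a ih =>
    rw [Finset.prod_range_succ, ← ih]
    symm
    ext i
    cases i with
    | zero =>
      rw [coeff_zero_mul_one_sub]
      simp only [Aser, coeff_mk]
      rw [g_zero, g_zero]
    | succ i =>
      rw [coeff_succ_mul_one_sub]
      simp only [Aser, coeff_mk]
      by_cases hia : i ≤ a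
      · have h := pascal₂ hq2 a i
        have hpow : q ^ ((i + 1) ^ 2) * (q ^ 2) ^ (a - i) = q ^ (2 * a + 1) * q ^ (i ^ 2) := by
          rw [← pow_mul, ← pow_add, ← pow_add]
          congr 1
          have : i ^ 2 + 2 * i + 1 = (i + 1) ^ 2 := by ring
          omega
        rw [h]
        linear_combination ((-1 : K) ^ i * g (q ^ 2) a i) * hpow
      · rw [g_of_lt (by omega : a + 1 < i + 1), g_of_lt (by omega : a < i + 1),
          g_of_lt (by omega : a < i)]
        ring

lemma prod_parity (f : ℕ → PowerSeries K) : ∀ n : ℕ,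
    ∏ j ∈ Finset.range n, f j =
      (∏ t ∈ Finset.range ((n + 1) / 2), f (2 * t)) *
        ∏ t ∈ Finset.range (n / 2), f (2 * t + 1) := by
  intro n
  induction n with
  | zero => simp
  | succ n ih =>
    rw [Finset.prod_range_succ, ih]
    rcases Nat.even_or_odd n with ⟨m, hm⟩ | ⟨m, hm⟩
    · rw [show (n + 1 + 1) / 2 = m + 1 by omega, show (n + 1) / 2 = m by omega,
        show n / 2 = m by omega, Finset.prod_range_succ,
        show 2 * m = n by omega]
      ring
    · rw [show (n + 1 + 1) / 2 = m + 1 by omega, show (n + 1) / 2 = m + 1 by omega,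
        show n / 2 = m by omega, Finset.prod_range_succ (fun t => f (2 * t + 1)),
        show 2 * m + 1 = n by omega]
      ring

/-- The central power series identity. -/
lemma main_ps (L : ℕ) :
    Aser tq ((L + 1) / 2) * Fser tq L = Fser (tq ^ 2) (L / 2) := by
  have h1 := Fser_unit tq_pow_ne_one L
  have h2 := Fser_unit tq2_pow_ne_one (L / 2)
  have h3 := Aser_eq tq tq2_pow_ne_one ((L + 1) / 2)
  have hsplit : ∏ j ∈ Finset.range (L + 1), (1 - C (tq ^ j) * X) =
      (∏ t ∈ Finset.range (L / 2 + 1), (1 - C ((tq ^ 2) ^ t) * X)) *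
        ∏ t ∈ Finset.range ((L + 1) / 2), (1 - C (tq ^ (2 * t + 1)) * X) := by
    rw [prod_parity (fun j => 1 - C (tq ^ j) * X) (L + 1)]
    congr 1
    · rw [show (L + 1 + 1) / 2 = L / 2 + 1 by omega]
      apply Finset.prod_congr rfl
      intro t _
      rw [pow_mul]
  set Pe := ∏ t ∈ Finset.range (L / 2 + 1), (1 - C ((tq ^ 2) ^ t) * X) with hPe
  set Po := ∏ t ∈ Finset.range ((L + 1) / 2), (1 - C (tq ^ (2 * t + 1)) * X) with hPo
  calc Aser tq ((L + 1) / 2) * Fser tq L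
      = Aser tq ((L + 1) / 2) * Fser tq L * (Fser (tq ^ 2) (L / 2) * Pe) := by rw [h2, mul_one]
    _ = Fser (tq ^ 2) (L / 2) * (Fser tq L * (Pe * Po)) := by rw [h3]; ring
    _ = Fser (tq ^ 2) (L / 2) := by rw [← hsplit, h1, mul_one]

/-- `gb` on natural number arguments equals `g`. -/
lemma gb_natCast (p : K) (n k : ℕ) : gb p (n : ℤ) (k : ℤ) = g p n k := by
  by_cases h : k ≤ n
  · rw [gb, if_pos ⟨Int.natCast_nonneg k, by exact_mod_cast h⟩, g, if_pos h,
      Int.toNat_natCast]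
    unfold NN DD
    rw [← Finset.prod_div_distrib]
    apply Finset.prod_congr rfl
    intro j _
    rw [show (n : ℤ) - k + 1 + j = ((n - k + 1 + j : ℕ) : ℤ) by omega,
      show (1 : ℤ) + (j : ℤ) = ((1 + j : ℕ) : ℤ) by omega, zpow_natCast, zpow_natCast]
  · rw [gb, if_neg (by omega), g, if_neg h]

end AltRed

/-- Alternating q-binomial reduction:
`Σ_{i=0}^M (-1)^i q^{i²} [L+M-i choose L]_q [⌊(L+1)/2⌋ choose i]_{q²} = [⌊L/2⌋+M choose M]_{q²}`. -/
theorem alternating_reduction (L M : ℕ) :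
    ∑ i ∈ Finset.range (M + 1),
      (-1 : K) ^ i * tq ^ ((i : ℤ) ^ 2) * gb tq ((L : ℤ) + M - i) L *
        gb (tq ^ 2) (((L : ℤ) + 1) / 2) i =
      gb (tq ^ 2) ((L : ℤ) / 2 + M) M := by
  have key := congrArg (PowerSeries.coeff M) (AltRed.main_ps L)
  rw [PowerSeries.coeff_mul, Finset.Nat.sum_antidiagonal_eq_sum_range_succ_mk] at key
  simp only [AltRed.Aser, AltRed.Fser, PowerSeries.coeff_mk] at key
  have hR : gb (tq ^ 2) ((L : ℤ) / 2 + M) M = AltRed.g (tq ^ 2) (L / 2 + M) (L / 2) := by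
    rw [show (L : ℤ) / 2 + M = ((L / 2 + M : ℕ) : ℤ) by omega, AltRed.gb_natCast,
      AltRed.g_symm AltRed.tq2_pow_ne_one (L / 2) M]
  rw [hR, ← key]
  apply Finset.sum_congr rfl
  intro i hi
  have him : i ≤ M := by simpa [Nat.lt_succ_iff] using hi
  rw [show (L : ℤ) + M - i = ((L + (M - i) : ℕ) : ℤ) by omega,
    show ((L : ℤ) + 1) / 2 = (((L + 1) / 2 : ℕ) : ℤ) by omega,
    AltRed.gb_natCast, AltRed.gb_natCast,
    show ((i : ℤ) ^ 2) = ((i ^ 2 : ℕ) : ℤ) by push_cast; ring, zpow_natCast]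
  ring
end
end
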